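/- arXiv:2207.08038 — 2 statements merged into one kernel-verified Lean document; each statement's English description precedes it below -/
import Mathlib

section
/- Let A be an n×m complex matrix, and let M := A⁺ − A⁺ X (Yᴴ A⁺ X)⁺ Yᴴ A⁺ for conformable matrices X, Y. If (A⁺)ᴴ·im(Y) is not orthogonal to im(X), then ker(M) ∩ im(X) ≠ {0}. -/
open Matrix
open scoped InnerProductSpace

def IsMPInv {m n : Type*} [Fintype m] [Fintype n] (A : Matrix m n ℂ) (Z : Matrix n m ℂ) : Prop :=
  A * Z * A = A ∧ Z * A * Z = Z ∧ (A * Z)ᴴ = A * Z ∧ (Z * A)ᴴ = Z * A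

lemma toEuclideanLin_mul_apply {a b c : ℕ} (A : Matrix (Fin a) (Fin b) ℂ)
    (B : Matrix (Fin b) (Fin c) ℂ) (x : EuclideanSpace ℂ (Fin c)) :
    Matrix.toEuclideanLin (A * B) x = Matrix.toEuclideanLin A (Matrix.toEuclideanLin B x) := by
  simp [Matrix.toEuclideanLin_apply, Matrix.mulVec_mulVec]

/-- If `(A⁺)ᴴ·im(Y)` is not orthogonal to `im(X)`, then
`ker M ∩ im X ≠ {0}` for `M = A⁺ − A⁺ X (Yᴴ A⁺ X)⁺ Yᴴ A⁺`. -/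
theorem stmt7 {n m p q : ℕ}
    (A : Matrix (Fin n) (Fin m) ℂ) (X : Matrix (Fin n) (Fin p) ℂ)
    (Y : Matrix (Fin m) (Fin q) ℂ) (Ap : Matrix (Fin m) (Fin n) ℂ)
    (hAp : IsMPInv A Ap)
    (Fp : Matrix (Fin p) (Fin q) ℂ) (hFp : IsMPInv (Yᴴ * Ap * X) Fp)
    (M : Matrix (Fin m) (Fin n) ℂ) (hM : M = Ap - Ap * X * Fp * Yᴴ * Ap)
    (hno : ¬ (∀ u ∈ Submodule.map (Matrix.toEuclideanLin Apᴴ)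
          (LinearMap.range (Matrix.toEuclideanLin Y)),
        ∀ v ∈ LinearMap.range (Matrix.toEuclideanLin X), ⟪u, v⟫_ℂ = 0)) :
    LinearMap.ker (Matrix.toEuclideanLin M) ⊓
      LinearMap.range (Matrix.toEuclideanLin X) ≠ ⊥ := by
  push_neg at hno
  obtain ⟨u, hu, v, hv, hne⟩ := hno
  obtain ⟨u', hu', rfl⟩ := hu
  obtain ⟨c, rfl⟩ := hu'
  obtain ⟨d, rfl⟩ := hv
  set F : Matrix (Fin q) (Fin p) ℂ := Yᴴ * Ap * X with hF
  -- F ≠ 0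
  have hinner : ⟪Matrix.toEuclideanLin Apᴴ (Matrix.toEuclideanLin Y c),
      Matrix.toEuclideanLin X d⟫_ℂ = ⟪c, Matrix.toEuclideanLin F d⟫_ℂ := by
    rw [hF, toEuclideanLin_mul_apply, toEuclideanLin_mul_apply,
      Matrix.toEuclideanLin_conjTranspose_eq_adjoint (A := Y), LinearMap.adjoint_inner_right,
      Matrix.toEuclideanLin_conjTranspose_eq_adjoint (A := Ap), LinearMap.adjoint_inner_left]
  have hFd : Matrix.toEuclideanLin F d ≠ 0 := by
    intro h
    rw [hinner, h, inner_zero_right] at hne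
    exact hne rfl
  have hFne : F ≠ 0 := by
    intro h0
    rw [h0] at hFd
    simp at hFd
  -- X * Fp ≠ 0
  have hXFp : X * Fp ≠ 0 := by
    intro h
    apply hFne
    have hFFp : F * Fp = 0 := by
      rw [hF, Matrix.mul_assoc, h, Matrix.mul_zero]
    calc F = F * Fp * F := (hFp.1).symm
    _ = 0 := by rw [hFFp, Matrix.zero_mul]
  -- find z with (X*Fp) z ≠ 0
  have hlin : Matrix.toEuclideanLin (X * Fp) ≠ 0 := by
    intro h
    exact hXFp (Matrix.toEuclideanLin.injective (by simpa using h))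
  obtain ⟨z, hz⟩ : ∃ z, Matrix.toEuclideanLin (X * Fp) z ≠ 0 := by
    by_contra h
    push_neg at h
    exact hlin (LinearMap.ext fun z => h z)
  set w := Matrix.toEuclideanLin (X * Fp) z with hw
  have hMXFp : M * (X * Fp) = 0 := by
    have h2 : Fp * (Yᴴ * Ap * X) * Fp = Fp := hFp.2.1
    rw [hM, Matrix.sub_mul]
    simp only [Matrix.mul_assoc] at h2 ⊢
    rw [h2, sub_self]
  have hker : w ∈ LinearMap.ker (Matrix.toEuclideanLin M) := by
    rw [LinearMap.mem_ker, hw, ← toEuclideanLin_mul_apply, hMXFp]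
    simp
  have hrange : w ∈ LinearMap.range (Matrix.toEuclideanLin X) := by
    rw [hw, toEuclideanLin_mul_apply]
    exact ⟨_, rfl⟩
  rw [Submodule.ne_bot_iff]
  exact ⟨w, ⟨hker, hrange⟩, hz⟩
end

section
/- Let K be an n×n symmetric positive-definite real matrix with largest eigenvalue λₙ, X an n×p real matrix of full column rank, P := I − X(XᴴX)⁻¹Xᴴ, and for real t with 0 ≤ t < 1/λₙ define Σ_t := I + tK. Then Σ_t is invertible, XᴴΣ_t⁻¹X is invertible, and Σ_t⁻¹ − Σ_t⁻¹X(XᴴΣ_t⁻¹X)⁻¹XᴴΣ_t⁻¹ = P(I + tKP)⁻¹ = P·Σ_{i=0}^{∞}(−tKP)^i, where the Neumann series converges since ‖tKP‖ < 1 in operator norm. -/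
/-!
Write `M = S⁻¹ - S⁻¹ X (Xᴴ S⁻¹ X)⁻¹ Xᴴ S⁻¹` and `P = 1 - X (Xᴴ X)⁻¹ Xᴴ`. Then `M X = 0`, hence
`M P = M`, and `M S = 1 - S⁻¹ X (Xᴴ S⁻¹ X)⁻¹ Xᴴ` is the identity on the range of `P` because
`Xᴴ P = 0`, i.e. `M S P = P`. Together these give `M (1 - P + S P) = P`, and for `S = 1 + t K` the
bracket is `1 + t K P`. In the `L²` operator norm `‖P‖ ≤ 1` and `‖K‖ = λₙ`, so `‖t K P‖ ≤ t λₙ < 1`: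
the Neumann series of `-t K P` converges to `(1 + t K P)⁻¹`, which in particular exists.
-/

open Matrix

namespace Matrix

lemma mulVec_injective_of_rank_eq_card {m n K : Type*} [Fintype n] [Field K] {X : Matrix m n K}
    (hX : X.rank = Fintype.card n) : Function.Injective X.mulVec := by
  rw [← coe_mulVecLin, ← LinearMap.ker_eq_bot, ← Submodule.finrank_eq_zero]
  have := X.mulVecLin.finrank_range_add_finrank_ker
  rw [← rank, hX, Module.finrank_fintype_fun_eq_card] at this
  omega

variable {m n : Type*} [Fintype m] [Fintype n] [DecidableEq m] [DecidableEq n]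

section Projection

variable {R : Type*} [CommRing R] [StarRing R]

noncomputable def residualProjection (X : Matrix m n R) : Matrix m m R :=
  1 - X * (Xᴴ * X)⁻¹ * Xᴴ

/-- The projection matrix of restricted maximum likelihood (REML) for covariance `S`. -/
noncomputable def remlProjection (S : Matrix m m R) (X : Matrix m n R) : Matrix m m R :=
  S⁻¹ - S⁻¹ * X * (Xᴴ * S⁻¹ * X)⁻¹ * Xᴴ * S⁻¹

variable {X : Matrix m n R}

lemma isHermitian_residualProjection (X : Matrix m n R) : (residualProjection X).IsHermitian := by
  simp only [IsHermitian, residualProjection, conjTranspose_sub, conjTranspose_one,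
    conjTranspose_mul, conjTranspose_nonsing_inv, conjTranspose_conjTranspose, Matrix.mul_assoc]

lemma residualProjection_mul_self (hX : IsUnit (Xᴴ * X).det) : residualProjection X * X = 0 := by
  rw [residualProjection, Matrix.sub_mul, Matrix.one_mul, Matrix.mul_assoc _ Xᴴ,
    Matrix.mul_assoc X, nonsing_inv_mul _ hX, Matrix.mul_one, sub_self]

lemma conjTranspose_mul_residualProjection (hX : IsUnit (Xᴴ * X).det) :
    Xᴴ * residualProjection X = 0 := by
  simpa [(isHermitian_residualProjection X).eq] using
    congrArg conjTranspose (residualProjection_mul_self hX)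

lemma mul_residualProjection_of_mul_eq_zero {M : Matrix m m R} (hMX : M * X = 0) :
    M * residualProjection X = M := by
  rw [residualProjection, Matrix.mul_sub, Matrix.mul_one, Matrix.mul_assoc X,
    ← Matrix.mul_assoc M, hMX, Matrix.zero_mul, sub_zero]

lemma isStarProjection_residualProjection (hX : IsUnit (Xᴴ * X).det) :
    IsStarProjection (residualProjection X) where
  isIdempotentElem := mul_residualProjection_of_mul_eq_zero (residualProjection_mul_self hX)
  isSelfAdjoint := isHermitian_residualProjection X

variable {S : Matrix m m R}

lemma remlProjection_mul_self (hXSX : IsUnit (Xᴴ * S⁻¹ * X).det) :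
    remlProjection S X * X = 0 := by
  simp only [remlProjection, Matrix.sub_mul, Matrix.mul_assoc]
  rw [← Matrix.mul_assoc Xᴴ, nonsing_inv_mul _ hXSX, Matrix.mul_one, sub_self]

lemma remlProjection_mul_mul_residualProjection (hS : IsUnit S.det)
    (hX : IsUnit (Xᴴ * X).det) :
    remlProjection S X * S * residualProjection X = residualProjection X := by
  simp only [remlProjection, Matrix.sub_mul, Matrix.mul_assoc]
  rw [← Matrix.mul_assoc S⁻¹, nonsing_inv_mul _ hS, Matrix.one_mul,
    conjTranspose_mul_residualProjection hX, Matrix.mul_zero, Matrix.mul_zero, Matrix.mul_zero,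
    sub_zero]

/-- Bott–Duffin: `remlProjection S X = P (1 - P + S P)⁻¹` with `P = residualProjection X`, as soon as
the bracket is invertible. -/
lemma remlProjection_mul_bottDuffin (hS : IsUnit S.det) (hX : IsUnit (Xᴴ * X).det)
    (hXSX : IsUnit (Xᴴ * S⁻¹ * X).det) :
    remlProjection S X * (1 - residualProjection X + S * residualProjection X) =
      residualProjection X := by
  rw [Matrix.mul_add, Matrix.mul_sub, Matrix.mul_one, ← Matrix.mul_assoc,
    remlProjection_mul_mul_residualProjection hS hX,
    mul_residualProjection_of_mul_eq_zero (remlProjection_mul_self hXSX), sub_self, zero_add]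

end Projection

section L2OpNorm

open scoped Matrix.Norms.L2Operator

lemma IsHermitian.l2_opNorm_le_of_abs_eigenvalues_le {A : Matrix n n ℝ} (hA : A.IsHermitian)
    {c : ℝ} (hc : 0 ≤ c) (h : ∀ i, |hA.eigenvalues i| ≤ c) : ‖A‖ ≤ c := by
  rw [← cfc_id' ℝ A]
  refine norm_cfc_le hc ?_
  rw [hA.spectrum_real_eq_range_eigenvalues]
  rintro _ ⟨i, rfl⟩
  exact h i

lemma PosSemidef.l2_opNorm_le_of_isGreatest {A : Matrix n n ℝ} (hA : A.PosSemidef)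
    {c : ℝ} (hc : IsGreatest (Set.range hA.1.eigenvalues) c) : ‖A‖ ≤ c := by
  obtain ⟨i, rfl⟩ := hc.1
  refine hA.1.l2_opNorm_le_of_abs_eigenvalues_le (hA.eigenvalues_nonneg i) fun j => ?_
  rw [abs_of_nonneg (hA.eigenvalues_nonneg j)]
  exact hc.2 ⟨j, rfl⟩

lemma PosSemidef.l2_opNorm_smul_mul_lt_one {K P : Matrix n n ℝ} (hK : K.PosSemidef) {c : ℝ}
    (hc : IsGreatest (Set.range hK.1.eigenvalues) c) (hP : IsStarProjection P) {t : ℝ}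
    (ht0 : 0 ≤ t) (ht : t * c < 1) : ‖t • (K * P)‖ < 1 := calc
  ‖t • (K * P)‖ ≤ t * (‖K‖ * ‖P‖) := by
    grw [norm_smul_le, Real.norm_of_nonneg ht0, norm_mul_le]
  _ ≤ t * (c * 1) := by
    have hKc := hK.l2_opNorm_le_of_isGreatest hc
    gcongr
    exacts [(norm_nonneg K).trans hKc, hP.norm_le]
  _ < 1 := by rwa [mul_one]

lemma isUnit_det_one_add_of_l2_opNorm_lt_one {A : Matrix n n ℝ} (hA : ‖A‖ < 1) :
    IsUnit (1 + A).det := by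
  rw [← isUnit_iff_isUnit_det, ← sub_neg_eq_add]
  exact isUnit_one_sub_of_norm_lt_one (by rwa [norm_neg])

lemma hasSum_neg_pow_of_l2_opNorm_lt_one {A : Matrix n n ℝ} (hA : ‖A‖ < 1) :
    HasSum (fun i : ℕ => (-A) ^ i) (1 + A)⁻¹ := by
  rw [nonsing_inv_eq_ringInverse, ← sub_neg_eq_add]
  exact hasSum_geom_series_inverse _ (by rwa [norm_neg])

end L2OpNorm

end Matrix

/-- For SPD `K` with largest eigenvalue `λₙ`, full-column-rank `X`,
`P = I − X(XᴴX)⁻¹Xᴴ`, and `0 ≤ t < 1/λₙ`, the matrix `Σ_t = I + tK` is invertible,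
`XᴴΣ_t⁻¹X` is invertible, and
`Σ_t⁻¹ − Σ_t⁻¹X(XᴴΣ_t⁻¹X)⁻¹XᴴΣ_t⁻¹ = P(I + tKP)⁻¹ = P·Σ_{i=0}^∞ (−tKP)^i`,
the Neumann series being summable. -/
theorem stmt19 {n p : ℕ}
    (K : Matrix (Fin n) (Fin n) ℝ) (hK : K.PosDef)
    (lam : ℝ) (hlam : IsGreatest (Set.range hK.1.eigenvalues) lam)
    (X : Matrix (Fin n) (Fin p) ℝ) (hX : X.rank = p)
    (P : Matrix (Fin n) (Fin n) ℝ) (hP : P = 1 - X * (Xᴴ * X)⁻¹ * Xᴴ)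
    (t : ℝ) (ht0 : 0 ≤ t) (ht : t < 1 / lam)
    (St : Matrix (Fin n) (Fin n) ℝ) (hSt : St = 1 + t • K) :
    IsUnit St.det ∧ IsUnit (Xᴴ * St⁻¹ * X).det ∧
    St⁻¹ - St⁻¹ * X * (Xᴴ * St⁻¹ * X)⁻¹ * Xᴴ * St⁻¹ = P * (1 + t • (K * P))⁻¹ ∧
    Summable (fun i : ℕ => (-(t • (K * P))) ^ i) ∧
    P * (1 + t • (K * P))⁻¹ = P * ∑' i : ℕ, (-(t • (K * P))) ^ i := by
  have hlam_pos : 0 < lam := by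
    obtain ⟨i, rfl⟩ := hlam.1
    exact hK.eigenvalues_pos i
  have hXinj : Function.Injective X.mulVec :=
    mulVec_injective_of_rank_eq_card (by rw [hX, Fintype.card_fin])
  have hXX : IsUnit (Xᴴ * X).det := (PosDef.conjTranspose_mul_self X hXinj).det_pos.ne'.isUnit
  have hSt_pd : St.PosDef := hSt ▸ PosDef.one.add_posSemidef (hK.posSemidef.smul ht0)
  have hXSX : IsUnit (Xᴴ * St⁻¹ * X).det :=
    (hSt_pd.inv.conjTranspose_mul_mul_same hXinj).det_pos.ne'.isUnit
  have hPres : residualProjection X = P := hP.symm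
  have hnorm := PosSemidef.l2_opNorm_smul_mul_lt_one hK.posSemidef hlam
    (hPres ▸ isStarProjection_residualProjection hXX) ht0 ((lt_div_iff₀ hlam_pos).mp ht)
  have hneumann := hasSum_neg_pow_of_l2_opNorm_lt_one hnorm
  have hbott := remlProjection_mul_bottDuffin hSt_pd.det_pos.ne'.isUnit hXX hXSX
  have hbracket : 1 - P + St * P = 1 + t • (K * P) := by
    rw [hSt, Matrix.add_mul, Matrix.one_mul, Matrix.smul_mul]
    abel
  rw [hPres, hbracket] at hbott
  refine ⟨hSt_pd.det_pos.ne'.isUnit, hXSX, ?_, hneumann.summable, by rw [hneumann.tsum_eq]⟩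
  show remlProjection St X = _
  rw [← mul_nonsing_inv_cancel_right _ (remlProjection St X)
    (isUnit_det_one_add_of_l2_opNorm_lt_one hnorm), hbott]
end
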